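/- Let R = ℚ[x]/(x^{n+1}), D(x^k) = (−1)^k x^k extended linearly, and T(x^k) = x^k(1+x)^{−k} extended linearly. Let σ ∈ ℚ with σ ≠ 0 and set ρ = 1−σ. Then for every s ∈ R, T(D((1+x)·s)) = (1−ρ)·(1+ρx)^{−1}·T(D(σ^{−1}(1+σx)·s)) in R. -/
import Mathlib
set_option synthInstance.maxHeartbeats 1000000
set_option maxHeartbeats 1000000


open Polynomial

/-- The ring ℚ[x]/(x^(n+1)). -/
abbrev Rq (n : ℕ) : Type :=
  Polynomial ℚ ⧸ Ideal.span {(Polynomial.X : Polynomial ℚ) ^ (n + 1)}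

/-- The class of x in ℚ[x]/(x^(n+1)). -/
noncomputable def xq (n : ℕ) : Rq n :=
  Ideal.Quotient.mk _ Polynomial.X

lemma xq_pow_zero (n : ℕ) : xq n ^ (n + 1) = 0 := by
  rw [xq, ← map_pow, Ideal.Quotient.eq_zero_iff_mem]
  exact Ideal.subset_span rfl

lemma xq_nilpotent (n : ℕ) : IsNilpotent (xq n) := ⟨n + 1, xq_pow_zero n⟩

lemma span_top (n : ℕ) :
    Submodule.span ℚ (Set.range fun k : ℕ => xq n ^ k) = ⊤ := by
  rw [eq_top_iff]
  rintro s -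
  obtain ⟨p, rfl⟩ := Ideal.Quotient.mk_surjective s
  induction p using Polynomial.induction_on' with
  | add p q hp hq => rw [map_add]; exact Submodule.add_mem _ hp hq
  | monomial m a =>
      have : (Ideal.Quotient.mk (Ideal.span {(Polynomial.X : Polynomial ℚ) ^ (n + 1)}))
          (Polynomial.monomial m a) = a • xq n ^ m := by
        rw [xq, ← map_pow, ← Polynomial.smul_X_eq_monomial]
        exact map_smul (Ideal.Quotient.mkₐ ℚ _) a (X ^ m)
      rw [this]
      exact Submodule.smul_mem _ a (Submodule.subset_span ⟨m, rfl⟩)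

/-- with D(x^k) = (−1)^k x^k, T(x^k) = x^k(1+x)^{−k}, σ ≠ 0 and
ρ = 1−σ, one has T(D((1+x)·s)) = (1−ρ)(1+ρx)^{−1}·T(D(σ^{−1}(1+σx)·s)). -/
theorem stmt5 (n : ℕ) (D T : Rq n →ₗ[ℚ] Rq n)
    (hD : ∀ k : ℕ, D (xq n ^ k) = (-1 : ℚ) ^ k • xq n ^ k)
    (hT : ∀ k : ℕ, T (xq n ^ k) = xq n ^ k * Ring.inverse ((1 + xq n) ^ k))
    (σ ρ : ℚ) (hσ : σ ≠ 0) (hρ : ρ = 1 - σ) (s : Rq n) :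
    T (D ((1 + xq n) * s))
      = (1 - ρ) • (Ring.inverse (1 + ρ • xq n)
          * T (D (σ⁻¹ • ((1 + σ • xq n) * s)))) := by
  -- both sides are linear in s; prove on the spanning set of monomials
  have hspan := span_top n
  have hmem : s ∈ Submodule.span ℚ (Set.range fun k : ℕ => xq n ^ k) := by
    rw [hspan]; trivial
  induction hmem using Submodule.span_induction with
  | mem y hy =>
      obtain ⟨k, rfl⟩ := hy
      set u := xq n with hu
      -- units
      have hA : IsUnit (1 + u) := (xq_nilpotent n).isUnit_one_add
      have hAk : ∀ m : ℕ, IsUnit ((1 + u) ^ m) := fun m => hA.pow m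
      have hPnil : IsNilpotent (ρ • u) := by
        refine ⟨n + 1, ?_⟩
        rw [_root_.smul_pow, xq_pow_zero, smul_zero]
      have hP : IsUnit (1 + ρ • u) := hPnil.isUnit_one_add
      -- compute D and T on both sides
      have e1 : (1 + u) * u ^ k = u ^ k + u ^ (k + 1) := by ring
      have e2 : σ⁻¹ • ((1 + σ • u) * u ^ k) = σ⁻¹ • u ^ k + u ^ (k + 1) := by
        have : (1 + σ • u) * u ^ k = u ^ k + σ • u ^ (k + 1) := by
          rw [add_mul, one_mul, smul_mul_assoc]; ring_nf
        rw [this, smul_add, smul_smul, inv_mul_cancel₀ hσ, one_smul]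
      rw [e1, e2]
      simp only [map_add, map_smul, hD, hT]
      -- now a ring computation with Ring.inverse atoms
      set iAk := Ring.inverse ((1 + u) ^ k) with hiAk
      set iAk1 := Ring.inverse ((1 + u) ^ (k + 1)) with hiAk1
      set iP := Ring.inverse (1 + ρ • u) with hiP
      have h1 : (1 + u) ^ k * iAk = 1 := Ring.mul_inverse_cancel _ (hAk k)
      have h2 : (1 + u) ^ (k + 1) * iAk1 = 1 := Ring.mul_inverse_cancel _ (hAk (k + 1))
      have h3 : (1 + ρ • u) * iP = 1 := Ring.mul_inverse_cancel _ hP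
      rw [Algebra.smul_def ρ u] at h3
      -- cancel the unit (1 + ρ•u) * (1+u)^(k+1)
      have hw : IsUnit ((1 + ρ • u) * (1 + u) ^ (k + 1)) := hP.mul (hAk (k + 1))
      refine hw.mul_left_cancel ?_
      -- convert smul to algebraMap multiplication
      have hsm : ∀ (a : ℚ) (r : Rq n), a • r = algebraMap ℚ (Rq n) a * r :=
        fun a r => Algebra.smul_def a r
      simp only [hsm]
      set c := algebraMap ℚ (Rq n) σ with hc
      set ci := algebraMap ℚ (Rq n) σ⁻¹ with hci
      set r := algebraMap ℚ (Rq n) ρ with hr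
      have hs : c * ci = 1 := by
        rw [hc, hci, ← map_mul, mul_inv_cancel₀ hσ, map_one]
      have hcr : algebraMap ℚ (Rq n) (1 - ρ) = c := by
        rw [hρ]; rw [hc]; ring_nf
      have he : algebraMap ℚ (Rq n) ((-1 : ℚ) ^ k) = (-1 : Rq n) ^ k := by
        rw [map_pow, map_neg, map_one]
      have he1 : algebraMap ℚ (Rq n) ((-1 : ℚ) ^ (k + 1)) = -(-1 : Rq n) ^ k := by
        rw [map_pow, map_neg, map_one, pow_succ]; ring
      have hrr : r = 1 - c := by rw [hr, hc, hρ, map_sub, map_one]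
      rw [hcr, he, he1, hrr]
      rw [hrr] at h3
      set e := (-1 : Rq n) ^ k with heq
      linear_combination (e * (1 + (1 - c) * u) * (1 + u) * u ^ k - c * ci * e * (1 + u) * u ^ k) * h1
        + (c * e * u ^ (k + 1) - e * (1 + (1 - c) * u) * u ^ (k + 1)) * h2
        - (c * (1 + u) ^ (k + 1) * (ci * e * u ^ k * iAk - e * u ^ (k + 1) * iAk1)) * h3
        - (e * (1 + u) * u ^ k) * hs
  | zero => simp
  | add y z _ _ hy hz =>
      simp only [mul_add, smul_add, map_add]
      rw [hy, hz]
  | smul a y _ hy =>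
      have h0 : σ⁻¹ • ((1 + σ • xq n) * (a • y)) = a • (σ⁻¹ • ((1 + σ • xq n) * y)) := by
        rw [mul_smul_comm, smul_comm]
      conv_rhs => rw [h0, map_smul, map_smul, mul_smul_comm]
      rw [mul_smul_comm, map_smul, map_smul, hy, smul_comm]
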